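/- Let A, Â ∈ ℝ^{n×n} be symmetric matrices with 0 ⪯ Â ⪯ A, and set P̂ := Â + I and M̂ := P̂^{-1/2}(A+I)P̂^{-1/2}. Then ‖log(M̂)‖₂ = log(1 + ‖P̂^{-1/2}(A − Â)P̂^{-1/2}‖₂) ≤ log(1 + ‖A − Â‖₂). -/

import Mathlib

open MeasureTheory ProbabilityTheory Matrix

/-- Matrix logarithm of a real symmetric matrix, obtained by applying the real logarithm
to the eigenvalues in a spectral decomposition. -/
noncomputable def matLog {n : ℕ} (B : Matrix (Fin n) (Fin n) ℝ) : Matrix (Fin n) (Fin n) ℝ :=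
  if hB : B.IsHermitian then
    (hB.eigenvectorUnitary : Matrix (Fin n) (Fin n) ℝ) *
      Matrix.diagonal (fun i => Real.log (hB.eigenvalues i)) *
      (star (hB.eigenvectorUnitary : Matrix (Fin n) (Fin n) ℝ))
  else 0

open scoped Classical in
/-- `B^{-1/2}`: the inverse of the unique positive semidefinite square root of a
positive semidefinite matrix `B`. -/
noncomputable def invSqrt {n : ℕ} (B : Matrix (Fin n) (Fin n) ℝ) : Matrix (Fin n) (Fin n) ℝ :=
  if hB : B.PosSemidef then
    ((hB.1.eigenvectorUnitary : Matrix (Fin n) (Fin n) ℝ) *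
      Matrix.diagonal (Real.sqrt ∘ hB.1.eigenvalues) *
      (star (hB.1.eigenvectorUnitary : Matrix (Fin n) (Fin n) ℝ)))⁻¹ else 0

/-- Squared Frobenius norm of a matrix. -/
noncomputable def frobSq {m n : ℕ} (H : Matrix (Fin m) (Fin n) ℝ) : ℝ :=
  ∑ i, ∑ j, (H i j) ^ 2

/-- Singular values of a matrix (square roots of the eigenvalues of `HᴴH`). -/
noncomputable def singVals {m n : ℕ} (H : Matrix (Fin m) (Fin n) ℝ) : Fin n → ℝ :=
  fun i => Real.sqrt (((by simpa using Matrix.isHermitian_conjTranspose_mul_self H : (Hᵀ * H).IsHermitian)).eigenvalues i)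

/-- Nuclear norm: sum of the singular values. -/
noncomputable def nuclearNorm {m n : ℕ} (H : Matrix (Fin m) (Fin n) ℝ) : ℝ :=
  ∑ i, singVals H i

/-- Spectral norm: largest singular value. -/
noncomputable def specNorm {m n : ℕ} (H : Matrix (Fin m) (Fin n) ℝ) : ℝ :=
  ⨆ i, singVals H i

/-- Eigenvalues of a symmetric matrix, sorted in decreasing order
(`eigDesc B i` is the `i`-th largest eigenvalue). -/
noncomputable def eigDesc {n : ℕ} (B : Matrix (Fin n) (Fin n) ℝ) : Fin n → ℝ :=
  if hB : B.IsHermitian then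
    fun i => (hB.eigenvalues ∘ Tuple.sort hB.eigenvalues) i.rev
  else 0

/-- Law of a standard Gaussian random vector in `ℝⁿ` (i.i.d. `gaussianReal 0 1` entries). -/
noncomputable def stdGaussian (n : ℕ) : Measure (Fin n → ℝ) :=
  Measure.pi fun _ => gaussianReal 0 1

/-- Law of a random `n × ℓ` matrix with i.i.d. standard Gaussian entries. -/
noncomputable def stdGaussianMatrix (n ℓ : ℕ) : Measure (Fin n → Fin ℓ → ℝ) :=
  Measure.pi fun _ => Measure.pi fun _ => gaussianReal 0 1

/-- The truncated-spectral-decomposition preconditioner `P_r = A_r + I`, where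
`A_r = U_r Λ_r U_rᵀ` keeps the `r` leading eigenvalues. -/
noncomputable def truncP {n : ℕ} (U : Matrix (Fin n) (Fin n) ℝ) (lam : Fin n → ℝ) (r : ℕ) :
    Matrix (Fin n) (Fin n) ℝ :=
  U * Matrix.diagonal (fun i : Fin n => if (i : ℕ) < r then lam i else 0) * Uᵀ + 1

/-- The idealized preconditioned matrix `M_r = P_r^{-1/2} (A + I) P_r^{-1/2}`. -/
noncomputable def truncM {n : ℕ} (A U : Matrix (Fin n) (Fin n) ℝ) (lam : Fin n → ℝ) (r : ℕ) :
    Matrix (Fin n) (Fin n) ℝ :=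
  invSqrt (truncP U lam r) * (A + 1) * invSqrt (truncP U lam r)

/-- The Nyström approximation `Â = AΩ(ΩᵀAΩ)⁻¹ΩᵀA`. -/
noncomputable def nystrom {n ℓ : ℕ} (A : Matrix (Fin n) (Fin n) ℝ)
    (Ω : Matrix (Fin n) (Fin ℓ) ℝ) : Matrix (Fin n) (Fin n) ℝ :=
  A * Ω * (Ωᵀ * A * Ω)⁻¹ * Ωᵀ * A

/-- The Nyström-preconditioned matrix `M̂ = P̂^{-1/2} (A + I) P̂^{-1/2}` with `P̂ = Â + I`. -/
noncomputable def nysPrec {n ℓ : ℕ} (A : Matrix (Fin n) (Fin n) ℝ)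
    (Ω : Matrix (Fin n) (Fin ℓ) ℝ) : Matrix (Fin n) (Fin n) ℝ :=
  invSqrt (nystrom A Ω + 1) * (A + 1) * invSqrt (nystrom A Ω + 1)

/-!
Write `S = P̂^{-1/2}`, so that `S P̂ S = I`. Then `M̂ = S (A + I) S = I + F` with
`F = S (A - Â) S ⪰ 0`, whose eigenvalues are `1 + λᵢ(F) ≥ 1`; hence
`‖log M̂‖₂ = log λ_max(M̂) = log (1 + ‖F‖₂)`. For the bound, `I - S² = S Â S ⪰ 0`, and with
`μ = ‖A - Â‖₂` we get `μ I - F = S (μ I - (A - Â)) S + μ (I - S²) ⪰ 0`, i.e. `‖F‖₂ ≤ μ`.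
-/

lemma Real.iSup_log_one_add {ι : Type*} [Finite ι] {f : ι → ℝ} (hf : ∀ i, 0 ≤ f i) :
    ⨆ i, Real.log (1 + f i) = Real.log (1 + ⨆ i, f i) := by
  cases isEmpty_or_nonempty ι
  · simp [Real.iSup_of_isEmpty]
  obtain ⟨j, hj⟩ := Finite.exists_max f
  rw [le_antisymm (ciSup_le hj) (le_ciSup (Finite.bddAbove_range f) j)]
  refine le_antisymm (ciSup_le fun i => ?_)
    (le_ciSup (Finite.bddAbove_range fun i => Real.log (1 + f i)) j)
  exact Real.log_le_log (by linarith [hf i]) (by linarith [hj i])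

lemma iSup_comp_eq_of_range_eq {α β ι κ : Type*} [SupSet β] {f : ι → α} {g : κ → α}
    (h : Set.range f = Set.range g) (φ : α → β) : ⨆ i, φ (f i) = ⨆ j, φ (g j) := by
  rw [← iSup_range', h, iSup_range']

lemma specNorm_nonneg {m n : ℕ} (H : Matrix (Fin m) (Fin n) ℝ) : 0 ≤ specNorm H :=
  Real.iSup_nonneg fun _ => Real.sqrt_nonneg _

namespace Matrix

lemma PosSemidef.mul_mul_self_of_isHermitian {ι : Type*} [Fintype ι] {B S : Matrix ι ι ℝ}
    (hB : B.PosSemidef) (hS : S.IsHermitian) : (S * B * S).PosSemidef := by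
  simpa only [hS.eq] using hB.mul_mul_conjTranspose_same S

variable {ι : Type*} [Fintype ι] [DecidableEq ι]

lemma unitary_conj_diagonal_mul_unitary_conj_diagonal (U : unitaryGroup ι ℝ) (d e : ι → ℝ) :
    (U * diagonal d * star (U : Matrix ι ι ℝ)) * (U * diagonal e * star (U : Matrix ι ι ℝ)) =
      U * diagonal (d * e) * star (U : Matrix ι ι ℝ) := by
  simp only [mul_assoc, ← mul_assoc (star (U : Matrix ι ι ℝ)), Unitary.coe_star_mul_self,
    one_mul, ← mul_assoc (diagonal d), diagonal_mul_diagonal]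
  rfl

namespace IsHermitian

variable {B : Matrix ι ι ℝ} (hB : B.IsHermitian)
include hB

lemma eq_unitary_conj_diagonal_eigenvalues :
    B = hB.eigenvectorUnitary * diagonal hB.eigenvalues *
      star (hB.eigenvectorUnitary : Matrix ι ι ℝ) := by
  simpa using hB.spectral_theorem

lemma range_eigenvalues_eq_of_eq_unitary_conj_diagonal {U : unitaryGroup ι ℝ} {d : ι → ℝ}
    (h : B = U * diagonal d * star (U : Matrix ι ι ℝ)) :
    Set.range hB.eigenvalues = Set.range d := by
  rw [← hB.spectrum_real_eq_range_eigenvalues, h, Unitary.spectrum_star_right_conjugate,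
    spectrum_diagonal]

lemma posSemidef_smul_one_sub_iff (c : ℝ) :
    (c • 1 - B).PosSemidef ↔ ∀ i, hB.eigenvalues i ≤ c := by
  set U : Matrix ι ι ℝ := (hB.eigenvectorUnitary : Matrix ι ι ℝ)
  have h : c • 1 - B = U * diagonal (fun i => c - hB.eigenvalues i) * star U := by
    conv_lhs => rw [hB.eq_unitary_conj_diagonal_eigenvalues]
    rw [smul_one_eq_diagonal, ← diagonal_sub, mul_sub, sub_mul, ← smul_one_eq_diagonal,
      mul_smul_one, smul_mul, Unitary.mul_star_self_of_mem hB.eigenvectorUnitary.2]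
  rw [h, IsUnit.posSemidef_star_right_conjugate_iff Unitary.isUnit_coe, posSemidef_diagonal_iff]
  simp only [sub_nonneg]

end IsHermitian

end Matrix

lemma specNorm_unitary_conj_diagonal {n : ℕ} (U : unitaryGroup (Fin n) ℝ) (d : Fin n → ℝ) :
    specNorm ((U : Matrix (Fin n) (Fin n) ℝ) * diagonal d * star (U : Matrix (Fin n) (Fin n) ℝ)) =
      ⨆ i, |d i| := by
  set B := (U : Matrix (Fin n) (Fin n) ℝ) * diagonal d * star (U : Matrix (Fin n) (Fin n) ℝ)
  have hB : Bᵀ = B := by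
    rw [← conjTranspose_eq_transpose_of_trivial]
    exact isHermitian_mul_mul_conjTranspose _ (isHermitian_diagonal d)
  have hBB : Bᵀ * B = U * diagonal (d * d) * star (U : Matrix (Fin n) (Fin n) ℝ) := by
    rw [hB]; exact unitary_conj_diagonal_mul_unitary_conj_diagonal U d d
  have hr := IsHermitian.range_eigenvalues_eq_of_eq_unitary_conj_diagonal
    (by simpa using isHermitian_conjTranspose_mul_self B) hBB
  simp only [specNorm, singVals]
  rw [← iSup_range' Real.sqrt, hr, iSup_range']
  simp [Real.sqrt_mul_self_eq_abs]

namespace Matrix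

variable {n : ℕ} {B E P S : Matrix (Fin n) (Fin n) ℝ}

lemma PosSemidef.specNorm_eq (hB : B.PosSemidef) : specNorm B = ⨆ i, hB.1.eigenvalues i := by
  conv_lhs => rw [hB.1.eq_unitary_conj_diagonal_eigenvalues]
  simp_rw [specNorm_unitary_conj_diagonal, abs_of_nonneg (hB.eigenvalues_nonneg _)]

lemma PosSemidef.posSemidef_specNorm_smul_one_sub (hB : B.PosSemidef) :
    (specNorm B • 1 - B).PosSemidef := by
  rw [hB.1.posSemidef_smul_one_sub_iff, hB.specNorm_eq]
  exact le_ciSup (Finite.bddAbove_range _)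

lemma PosSemidef.specNorm_le_of_posSemidef_smul_one_sub (hB : B.PosSemidef) {c : ℝ} (hc : 0 ≤ c)
    (h : (c • 1 - B).PosSemidef) : specNorm B ≤ c := by
  rw [hB.specNorm_eq]
  exact Real.iSup_le ((hB.1.posSemidef_smul_one_sub_iff c).mp h) hc

lemma _root_.specNorm_mul_mul_self_le (hS : S.IsHermitian) (hSS : (1 - S * S).PosSemidef)
    (hE : E.PosSemidef) : specNorm (S * E * S) ≤ specNorm E := by
  refine (hE.mul_mul_self_of_isHermitian hS).specNorm_le_of_posSemidef_smul_one_sub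
    (specNorm_nonneg E) ?_
  have h : specNorm E • 1 - S * E * S =
      S * (specNorm E • 1 - E) * S + specNorm E • (1 - S * S) := by
    simp only [mul_sub, sub_mul, smul_sub, mul_smul_comm, smul_mul_assoc, mul_one]
    abel
  rw [h]
  exact (hE.posSemidef_specNorm_smul_one_sub.mul_mul_self_of_isHermitian hS).add
    (hSS.smul (specNorm_nonneg E))

lemma PosSemidef.specNorm_matLog_one_add (hB : B.PosSemidef) :
    specNorm (matLog (1 + B)) = Real.log (1 + specNorm B) := by
  have hM : (1 + B).IsHermitian := isHermitian_one.add hB.1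
  have hdecomp : 1 + B = hB.1.eigenvectorUnitary * diagonal (fun i => 1 + hB.1.eigenvalues i) *
      star (hB.1.eigenvectorUnitary : Matrix (Fin n) (Fin n) ℝ) := by
    conv_lhs => rw [hB.1.eq_unitary_conj_diagonal_eigenvalues]
    rw [← diagonal_add, diagonal_one, mul_add, add_mul, mul_one,
      Unitary.mul_star_self_of_mem hB.1.eigenvectorUnitary.2]
  rw [matLog, dif_pos hM, specNorm_unitary_conj_diagonal, hB.specNorm_eq,
    ← Real.iSup_log_one_add hB.eigenvalues_nonneg,
    iSup_comp_eq_of_range_eq (hM.range_eigenvalues_eq_of_eq_unitary_conj_diagonal hdecomp)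
      fun x => |Real.log x|]
  simp_rw [abs_of_nonneg (Real.log_nonneg (le_add_of_nonneg_right (hB.eigenvalues_nonneg _)))]

lemma PosSemidef.exists_sqrt_invSqrt_eq_inv (hP : P.PosSemidef) :
    ∃ Q : Matrix (Fin n) (Fin n) ℝ, Q.IsHermitian ∧ Q * Q = P ∧ invSqrt P = Q⁻¹ := by
  refine ⟨hP.1.eigenvectorUnitary * diagonal (Real.sqrt ∘ hP.1.eigenvalues) *
      star (hP.1.eigenvectorUnitary : Matrix (Fin n) (Fin n) ℝ),
    isHermitian_mul_mul_conjTranspose _ (isHermitian_diagonal _), ?_,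
    by rw [invSqrt, dif_pos hP]⟩
  rw [unitary_conj_diagonal_mul_unitary_conj_diagonal]
  conv_rhs => rw [hP.1.eq_unitary_conj_diagonal_eigenvalues]
  congr 3
  ext i
  exact Real.mul_self_sqrt (hP.eigenvalues_nonneg i)

lemma PosSemidef.isHermitian_invSqrt (hP : P.PosSemidef) : (invSqrt P).IsHermitian := by
  obtain ⟨Q, hQ, -, hS⟩ := hP.exists_sqrt_invSqrt_eq_inv
  exact hS ▸ hQ.inv

lemma PosDef.invSqrt_mul_mul_invSqrt (hP : P.PosDef) : invSqrt P * P * invSqrt P = 1 := by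
  obtain ⟨Q, -, hQQ, hS⟩ := hP.posSemidef.exists_sqrt_invSqrt_eq_inv
  have hQ : IsUnit Q.det := by
    refine isUnit_iff_ne_zero.mpr fun h => hP.det_pos.ne' ?_
    rw [← hQQ, det_mul, h, zero_mul]
  rw [hS, ← hQQ, ← mul_assoc, nonsing_inv_mul _ hQ, one_mul, mul_nonsing_inv _ hQ]

end Matrix

theorem stmt12_general {n : ℕ} (A Ahat : Matrix (Fin n) (Fin n) ℝ)
    (hpsd : Ahat.PosSemidef) (hle : (A - Ahat).PosSemidef) :
    specNorm (matLog (invSqrt (Ahat + 1) * (A + 1) * invSqrt (Ahat + 1)))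
        = Real.log (1 + specNorm (invSqrt (Ahat + 1) * (A - Ahat) * invSqrt (Ahat + 1))) ∧
      specNorm (matLog (invSqrt (Ahat + 1) * (A + 1) * invSqrt (Ahat + 1))) ≤ Real.log (1 + specNorm (A - Ahat)) := by
  have hP : (Ahat + 1).PosDef := PosDef.posSemidef_add hpsd PosDef.one
  set S := invSqrt (Ahat + 1)
  have hS : S.IsHermitian := hP.posSemidef.isHermitian_invSqrt
  have hSPS : S * (Ahat + 1) * S = 1 := hP.invSqrt_mul_mul_invSqrt
  have hM : S * (A + 1) * S = 1 + S * (A - Ahat) * S := by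
    conv_rhs => rw [← hSPS, ← add_mul, ← mul_add]
    congr 2
    abel
  have hSS : (1 - S * S).PosSemidef := by
    have h : 1 - S * S = S * Ahat * S := by
      rw [← hSPS]
      simp only [mul_add, add_mul, mul_one]
      abel
    exact h ▸ hpsd.mul_mul_self_of_isHermitian hS
  have hF := hle.mul_mul_self_of_isHermitian hS
  rw [hM, hF.specNorm_matLog_one_add]
  refine ⟨rfl, Real.log_le_log (by linarith [specNorm_nonneg (S * (A - Ahat) * S)]) ?_⟩
  linarith [specNorm_mul_mul_self_le hS hSS hle]

theorem stmt12 {n : ℕ} (A Ahat : Matrix (Fin n) (Fin n) ℝ) (hAs : A.IsSymm) (hAhs : Ahat.IsSymm)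
    (hpsd : Ahat.PosSemidef) (hle : (A - Ahat).PosSemidef) :
    specNorm (matLog (invSqrt (Ahat + 1) * (A + 1) * invSqrt (Ahat + 1)))
        = Real.log (1 + specNorm (invSqrt (Ahat + 1) * (A - Ahat) * invSqrt (Ahat + 1))) ∧
      specNorm (matLog (invSqrt (Ahat + 1) * (A + 1) * invSqrt (Ahat + 1))) ≤ Real.log (1 + specNorm (A - Ahat)) :=
  stmt12_general A Ahat hpsd hle
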